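/- Let 0 ≤ γ < 1, β > 0, and let f be analytic on Ω_γ = {z : |z + γ/(1-γ)| < 1/(1-γ)} with |f| ≤ 1, with Taylor expansion f(z) = Σ_{n≥0} a_n z^n on the unit disk. Then Σ_{n≥0} |a_n| r^n/(n+β) ≤ 1/β for all r ∈ [0, R_{γ,β}], where R_{γ,β} ∈ (0,1) is the positive root of 1/β = (2/(1+γ))Σ_{n≥1} x^n/(n+β). -/

import Mathlib

/-!
Write `ψ(u) = (1 + γ) u / (1 + γ u)`, a conformal map of the unit disc onto `Ω_γ`, with inverse
`φ(z) = z / (1 + γ - γ z)`. Then `g = f ∘ ψ` maps the unit disc into the closed unit disc, so by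
Wiener's inequality (Schwarz–Pick applied to the `k`-sections of `g`) its coefficients `b_k` satisfy
`|b_k| ≤ 1 - |b_0|²` for `k ≥ 1`, where `b_0 = a_0`. Since `f = g ∘ φ` and every power `φ^k` has
nonnegative Taylor coefficients whose sum over `k ≥ 1` is `1 / (1 + γ)` in each degree `n ≥ 1`,
`|a_n| ≤ (1 - |a_0|²) / (1 + γ)`. Summing against `r^n / (n + β)` and using the defining equation
of `R_{γ,β}` leaves `(2|a_0| + 1 - |a_0|²) / (2β) ≤ 1 / β`.
-/

open Metric Set Filter Topology Finset ComplexConjugate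
open scoped NNReal

section PowerSeriesOnDisk

variable {a b : ℕ → ℂ} {f : ℂ → ℂ}

lemma hasFPowerSeriesOnBall_ofScalars {r : ℝ≥0} (hr : 0 < r)
    (h : ∀ z ∈ ball (0 : ℂ) r, HasSum (fun n => a n * z ^ n) (f z)) :
    HasFPowerSeriesOnBall f (FormalMultilinearSeries.ofScalars ℂ a) 0 r where
  r_le := by
    refine ENNReal.le_of_forall_nnreal_lt fun ρ hρ => ?_
    have hmem : (ρ : ℂ) ∈ ball (0 : ℂ) r := by
      simpa [abs_of_nonneg ρ.2] using hρ
    refine FormalMultilinearSeries.le_radius_of_tendsto _ (l := 0) ?_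
    simpa [FormalMultilinearSeries.ofScalars_norm] using
      ((h _ hmem).summable.tendsto_atTop_zero).norm
  r_pos := by simpa using hr
  hasSum {y} hy := by
    rw [Metric.eball_coe] at hy
    simpa [FormalMultilinearSeries.ofScalars_apply_eq, mul_comm] using h y hy

lemma coeff_eq_of_hasSum {r : ℝ} (hr : 0 < r)
    (ha : ∀ z ∈ ball (0 : ℂ) r, HasSum (fun n => a n * z ^ n) (f z))
    (hb : ∀ z ∈ ball (0 : ℂ) r, HasSum (fun n => b n * z ^ n) (f z)) : a = b := by
  lift r to ℝ≥0 using hr.le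
  exact FormalMultilinearSeries.ofScalars_series_injective ℂ ℂ <|
    (hasFPowerSeriesOnBall_ofScalars hr ha).hasFPowerSeriesAt.eq_formalMultilinearSeries
      (hasFPowerSeriesOnBall_ofScalars hr hb).hasFPowerSeriesAt

lemma hasSum_mul_zero_pow (a : ℕ → ℂ) : HasSum (fun n => a n * 0 ^ n) (a 0) := by
  simpa using hasSum_single (f := fun n => a n * 0 ^ n) 0 fun n hn => by simp [hn]

lemma exists_hasSum_of_differentiableOn {G : ℂ → ℂ} {r : ℝ}
    (hG : DifferentiableOn ℂ G (ball 0 r)) :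
    ∃ d : ℕ → ℂ, ∀ z ∈ ball (0 : ℂ) r, HasSum (fun n => d n * z ^ n) (G z) :=
  ⟨fun n => iteratedDeriv n G 0 / n.factorial, fun z hz => by
    simpa [div_eq_inv_mul, mul_assoc, mul_comm, mul_left_comm] using
      Complex.hasSum_taylorSeries_on_ball hG hz⟩

end PowerSeriesOnDisk

lemma sq_norm_one_sub_conj_mul_sub_sq_norm_sub (a w : ℂ) :
    ‖1 - conj a * w‖ ^ 2 - ‖w - a‖ ^ 2 = (1 - ‖a‖ ^ 2) * (1 - ‖w‖ ^ 2) := by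
  simp only [← Complex.normSq_eq_norm_sq, Complex.normSq_apply, Complex.sub_re, Complex.sub_im,
    Complex.mul_re, Complex.mul_im, Complex.one_re, Complex.one_im, Complex.conj_re,
    Complex.conj_im]
  ring

lemma norm_sub_le_norm_one_sub_conj_mul {a w : ℂ} (ha : ‖a‖ ≤ 1) (hw : ‖w‖ ≤ 1) :
    ‖w - a‖ ≤ ‖1 - conj a * w‖ := by
  have := sq_norm_one_sub_conj_mul_sub_sq_norm_sub a w
  have : 0 ≤ (1 - ‖a‖ ^ 2) * (1 - ‖w‖ ^ 2) := by
    apply mul_nonneg <;> nlinarith [norm_nonneg a, norm_nonneg w]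
  exact (pow_le_pow_iff_left₀ (norm_nonneg _) (norm_nonneg _) two_ne_zero).1 (by linarith)

lemma norm_sub_lt_norm_one_sub_conj_mul {a w : ℂ} (ha : ‖a‖ < 1) (hw : ‖w‖ < 1) :
    ‖w - a‖ < ‖1 - conj a * w‖ := by
  have := sq_norm_one_sub_conj_mul_sub_sq_norm_sub a w
  have : 0 < (1 - ‖a‖ ^ 2) * (1 - ‖w‖ ^ 2) := by
    apply mul_pos <;> nlinarith [norm_nonneg a, norm_nonneg w]
  exact (pow_lt_pow_iff_left₀ (norm_nonneg _) (norm_nonneg _) two_ne_zero).1 (by linarith)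

lemma deriv_eq_zero_of_norm_eq_one {C : ℂ → ℂ} (hC : DifferentiableOn ℂ C (ball 0 1))
    (hCb : MapsTo C (ball 0 1) (closedBall 0 1)) (h : ‖C 0‖ = 1) : deriv C 0 = 0 := by
  have h0 : (0 : ℂ) ∈ ball (0 : ℂ) 1 := mem_ball_self one_pos
  have hmax : IsMaxOn (norm ∘ C) (ball 0 1) 0 := fun z hz => by
    simpa [h] using hCb hz
  have hconst : C =ᶠ[𝓝 0] fun _ => C 0 :=
    eventuallyEq_of_mem (isOpen_ball.mem_nhds h0) <|
      Complex.eqOn_of_isPreconnected_of_isMaxOn_norm (convex_ball _ _).isPreconnected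
        isOpen_ball hC h0 hmax
  rw [hconst.deriv_eq, deriv_const]

theorem norm_deriv_le_one_sub_sq {C : ℂ → ℂ} (hC : DifferentiableOn ℂ C (ball 0 1))
    (hCb : MapsTo C (ball 0 1) (closedBall 0 1)) : ‖deriv C 0‖ ≤ 1 - ‖C 0‖ ^ 2 := by
  have h0 : (0 : ℂ) ∈ ball (0 : ℂ) 1 := mem_ball_self one_pos
  set t := C 0
  have hCb' : ∀ z ∈ ball (0 : ℂ) 1, ‖C z‖ ≤ 1 := fun z hz => by simpa using hCb hz
  rcases (hCb' 0 h0).eq_or_lt with ht | ht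
  · rw [deriv_eq_zero_of_norm_eq_one hC hCb ht, ht]; norm_num
  have hden : ∀ z ∈ ball (0 : ℂ) 1, 1 - conj t * C z ≠ 0 := fun z hz => by
    refine sub_ne_zero.2 fun h => ?_
    have : ‖conj t * C z‖ < 1 := by
      rw [norm_mul, Complex.norm_conj]
      nlinarith [hCb' z hz, norm_nonneg t, norm_nonneg (C z)]
    simp [← h] at this
  -- composing with the disc automorphism sending `t` to `0` reduces to the Schwarz lemma
  set B : ℂ → ℂ := fun z => (C z - t) / (1 - conj t * C z)
  have hB : DifferentiableOn ℂ B (ball 0 1) :=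
    (hC.sub_const t).div ((hC.const_mul _).const_sub 1) hden
  have hB0 : B 0 = 0 := by simp [B, t]
  have hBmaps : MapsTo B (ball 0 1) (closedBall (B 0) 1) := fun z hz => by
    rw [hB0, mem_closedBall, dist_zero_right, norm_div]
    exact div_le_one_of_le₀ (norm_sub_le_norm_one_sub_conj_mul ht.le (hCb' z hz))
      (norm_nonneg _)
  have hCd : HasDerivAt C (deriv C 0) 0 :=
    (hC.differentiableAt (isOpen_ball.mem_nhds h0)).hasDerivAt
  have hBd : deriv B 0 = deriv C 0 / (1 - conj t * t) := by
    rw [show deriv B 0 = _ from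
      ((hCd.sub_const t).div ((hCd.const_mul (conj t)).const_sub 1) (hden 0 h0)).deriv]
    have := hden 0 h0
    simp only [show C 0 = t from rfl, sub_self, zero_mul, sub_zero]
    field_simp
  have hnorm : ‖1 - conj t * t‖ = 1 - ‖t‖ ^ 2 := by
    rw [Complex.conj_mul', ← Complex.ofReal_pow, ← Complex.ofReal_one, ← Complex.ofReal_sub,
      Complex.norm_real, Real.norm_of_nonneg (by nlinarith [norm_nonneg t])]
  have hpos : 0 < 1 - ‖t‖ ^ 2 := by nlinarith [norm_nonneg t]
  have := Complex.norm_deriv_le_div_of_mapsTo_ball hB hBmaps one_pos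
  rw [hBd, norm_div, hnorm, div_one, div_le_one hpos] at this
  exact this

lemma IsPrimitiveRoot.sum_pow_pow_eq_ite {R : Type*} [CommRing R] [IsDomain R] {ζ : R} {k : ℕ}
    (hζ : IsPrimitiveRoot ζ k) (m : ℕ) :
    ∑ j ∈ range k, (ζ ^ m) ^ j = if k ∣ m then (k : R) else 0 := by
  split_ifs with hkm
  · simp [(hζ.pow_eq_one_iff_dvd m).2 hkm]
  · have hne : ζ ^ m - 1 ≠ 0 := sub_ne_zero.2 fun h => hkm ((hζ.pow_eq_one_iff_dvd m).1 h)
    have hk : (ζ ^ m) ^ k = 1 := by rw [← pow_mul, mul_comm, pow_mul, hζ.pow_eq_one, one_pow]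
    simpa [hk, hne] using geom_sum_mul (ζ ^ m) k

-- averaging over the `k`-th roots of unity keeps exactly the powers divisible by `k`
lemma hasSum_coeff_mul_pow_of_average {d : ℕ → ℂ} {G : ℂ → ℂ} {r : ℝ}
    (hd : ∀ z ∈ ball (0 : ℂ) r, HasSum (fun m => d m * z ^ m) (G z)) {k : ℕ} (hk : k ≠ 0)
    {ζ u : ℂ} (hζ : IsPrimitiveRoot ζ k) (hu : u ∈ ball (0 : ℂ) r) :
    HasSum (fun m => d (k * m) * (u ^ k) ^ m) ((k : ℂ)⁻¹ * ∑ j ∈ range k, G (ζ ^ j * u)) := by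
  have hmem : ∀ j : ℕ, ζ ^ j * u ∈ ball (0 : ℂ) r := fun j => by
    simpa [norm_mul, hζ.norm'_eq_one hk] using hu
  have havg : HasSum (fun m => ∑ j ∈ range k, (k : ℂ)⁻¹ * (d m * (ζ ^ j * u) ^ m))
      ((k : ℂ)⁻¹ * ∑ j ∈ range k, G (ζ ^ j * u)) := by
    rw [mul_sum]
    exact hasSum_sum fun j _ => (hd _ (hmem j)).mul_left _
  have hterm : ∀ m, ∑ j ∈ range k, (k : ℂ)⁻¹ * (d m * (ζ ^ j * u) ^ m) =
      if k ∣ m then d m * u ^ m else 0 := fun m => by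
    have hsplit : ∀ j, (k : ℂ)⁻¹ * (d m * (ζ ^ j * u) ^ m) =
        (k : ℂ)⁻¹ * (d m * u ^ m) * (ζ ^ m) ^ j := fun j => by
      rw [mul_pow, ← pow_mul, mul_comm j m, pow_mul]; ring
    simp only [hsplit, ← mul_sum, hζ.sum_pow_pow_eq_ite]
    split_ifs
    · field_simp
    · simp
  simp only [hterm] at havg
  convert ((mul_right_injective₀ hk).hasSum_iff fun m hm => ?_).2 havg using 1
  · ext m
    simp [pow_mul]
  · exact if_neg fun ⟨c, hc⟩ => hm ⟨c, hc.symm⟩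

theorem norm_coeff_le_one_sub_sq {d : ℕ → ℂ} {G : ℂ → ℂ}
    (hd : ∀ z ∈ ball (0 : ℂ) 1, HasSum (fun m => d m * z ^ m) (G z))
    (hG : MapsTo G (ball 0 1) (closedBall 0 1)) {k : ℕ} (hk : k ≠ 0) :
    ‖d k‖ ≤ 1 - ‖d 0‖ ^ 2 := by
  have hζ := Complex.isPrimitiveRoot_exp k hk
  set ζ := Complex.exp (2 * Real.pi * Complex.I / k)
  have hroot : ∀ v ∈ ball (0 : ℂ) 1, ∃ u ∈ ball (0 : ℂ) 1, u ^ k = v := fun v hv => by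
    obtain ⟨u, rfl⟩ := IsAlgClosed.exists_pow_nat_eq v (Nat.pos_of_ne_zero hk)
    refine ⟨u, ?_, rfl⟩
    rw [mem_ball_zero_iff, norm_pow] at *
    exact (pow_lt_one_iff_of_nonneg (norm_nonneg u) hk).1 hv
  set C : ℂ → ℂ := fun v => ∑' m, d (k * m) * v ^ m
  have hC : ∀ v ∈ ball (0 : ℂ) 1, HasSum (fun m => d (k * m) * v ^ m) (C v) := fun v hv => by
    obtain ⟨u, hu, rfl⟩ := hroot v hv
    exact (hasSum_coeff_mul_pow_of_average hd hk hζ hu).summable.hasSum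
  have hCb : MapsTo C (ball 0 1) (closedBall 0 1) := fun v hv => by
    obtain ⟨u, hu, rfl⟩ := hroot v hv
    rw [(hC _ hv).unique (hasSum_coeff_mul_pow_of_average hd hk hζ hu), mem_closedBall_zero_iff]
    calc ‖(k : ℂ)⁻¹ * ∑ j ∈ range k, G (ζ ^ j * u)‖
        ≤ (k : ℝ)⁻¹ * ∑ j ∈ range k, ‖G (ζ ^ j * u)‖ := by
          rw [norm_mul, norm_inv, Complex.norm_natCast]
          gcongr
          exact norm_sum_le _ _
      _ ≤ (k : ℝ)⁻¹ * ∑ j ∈ range k, 1 := by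
          gcongr with j
          refine mem_closedBall_zero_iff.1 (hG ?_)
          simpa [norm_mul, hζ.norm'_eq_one hk] using hu
      _ = 1 := by simp [hk]
  have hp := hasFPowerSeriesOnBall_ofScalars (r := 1) one_pos (by simpa using hC)
  have hCd : DifferentiableOn ℂ C (ball 0 1) := by
    simpa only [Metric.eball_coe, NNReal.coe_one] using hp.differentiableOn
  have hC0 : C 0 = d 0 := by
    simpa using (hC 0 (mem_ball_self one_pos)).unique (hasSum_mul_zero_pow fun m => d (k * m))
  have hC' : deriv C 0 = d k := by
    simp [hp.hasFPowerSeriesAt.deriv]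
  simpa [hC0, hC'] using norm_deriv_le_one_sub_sq hCd hCb

lemma hasSum_tsum_mul_pow_of_hasSum_comp {d : ℕ → ℂ} {e : ℕ → ℕ → ℂ} {z w s : ℂ}
    (hd : HasSum (fun k => d k * w ^ k) s) (he : ∀ k, HasSum (fun n => e n k * z ^ n) (w ^ k))
    (hF : Summable fun p : ℕ × ℕ => d p.1 * e p.2 p.1 * z ^ p.2) :
    HasSum (fun n => (∑' k, d k * e n k) * z ^ n) s := by
  have hFs : HasSum (fun p : ℕ × ℕ => d p.1 * e p.2 p.1 * z ^ p.2) s := by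
    convert hF.hasSum using 1
    rw [hF.tsum_prod, ← hd.tsum_eq]
    congr 1 with k
    simp only [mul_assoc, tsum_mul_left, (he k).tsum_eq]
  refine ((Equiv.prodComm ℕ ℕ).hasSum_iff.2 hFs).prod_fiberwise fun n => ?_
  simpa only [Function.comp_apply, Equiv.prodComm_apply, Prod.swap_prod_mk, tsum_mul_right] using
    ((hF.comp_injective (Equiv.prodComm ℕ ℕ).injective).prod_factor n).hasSum

-- For `1 ≤ k ≤ n` this is `C(n-1, k-1) γ^(n-k) / (1+γ)^n`; the symmetric form `C(n-1, n-k)` also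
-- gives the right values `1` at `n = k = 0` and `0` at `k = 0 < n`.
noncomputable def moebiusPowCoeff (γ : ℝ) (n k : ℕ) : ℝ :=
  if k ≤ n then (n - 1).choose (n - k) * γ ^ (n - k) / (1 + γ) ^ n else 0

namespace moebiusPowCoeff

variable {γ : ℝ}

lemma nonneg (hγ : 0 ≤ γ) (n k : ℕ) : 0 ≤ moebiusPowCoeff γ n k := by
  unfold moebiusPowCoeff; split_ifs <;> positivity

lemma eq_zero_of_lt {n k : ℕ} (h : n < k) : moebiusPowCoeff γ n k = 0 := by
  simp [moebiusPowCoeff, h.not_ge]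

lemma zero_right {n : ℕ} (hn : n ≠ 0) : moebiusPowCoeff γ n 0 = 0 := by
  simp [moebiusPowCoeff, Nat.choose_eq_zero_of_lt (show n - 1 < n by omega)]

lemma hasSum_row (hγ : 1 + γ ≠ 0) {n : ℕ} (hn : n ≠ 0) :
    HasSum (fun k => moebiusPowCoeff γ n k) (1 / (1 + γ)) := by
  obtain ⟨m, rfl⟩ := Nat.exists_eq_succ_of_ne_zero hn
  have hsupp : ∀ k ∉ range (m + 2), moebiusPowCoeff γ (m + 1) k = 0 := fun k hk => by
    simp only [Finset.mem_range] at hk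
    simp [moebiusPowCoeff, show ¬ k ≤ m + 1 by omega]
  suffices h : ∑ k ∈ range (m + 2), moebiusPowCoeff γ (m + 1) k = 1 / (1 + γ) from
    h ▸ hasSum_sum_of_ne_finset_zero hsupp
  have hterm : ∀ j ∈ range (m + 2), moebiusPowCoeff γ (m + 1) (m + 2 - 1 - j) =
      γ ^ j * 1 ^ (m - j) * m.choose j / (1 + γ) ^ (m + 1) := fun j hj => by
    simp only [Finset.mem_range] at hj
    rw [moebiusPowCoeff, if_pos (by omega), show m + 1 - (m + 2 - 1 - j) = j by omega,
      Nat.add_sub_cancel, one_pow, mul_one]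
    ring
  rw [← sum_range_reflect, sum_congr rfl hterm, ← sum_div, sum_range_succ, Nat.choose_succ_self,
    ← add_pow]
  field_simp
  ring

lemma hasSum_pow (hγ : 0 ≤ γ) {z : ℂ} (hz : ‖z‖ < 1) (k : ℕ) :
    HasSum (fun n => (moebiusPowCoeff γ n k : ℂ) * z ^ n) ((z / (1 + γ - γ * z)) ^ k) := by
  rcases k with _ | j
  · convert hasSum_single (f := fun n => (moebiusPowCoeff γ n 0 : ℂ) * z ^ n) 0 fun n hn => ?_
    · simp [moebiusPowCoeff]
    · simp [zero_right hn]
  have h1γ : (1 + γ : ℂ) ≠ 0 := by exact_mod_cast (by positivity : (0 : ℝ) < 1 + γ).ne'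
  set w : ℂ := γ / (1 + γ) * z
  have hw : ‖w‖ < 1 := by
    have : γ / (1 + γ) < 1 := by rw [div_lt_one (by positivity)]; linarith
    calc ‖w‖ = γ / (1 + γ) * ‖z‖ := by
          rw [norm_mul, ← Complex.ofReal_one, ← Complex.ofReal_add, ← Complex.ofReal_div,
            Complex.norm_real, Real.norm_of_nonneg (by positivity)]
      _ < 1 := by nlinarith [norm_nonneg z]
  have h1w : 1 - w ≠ 0 := sub_ne_zero.2 fun h => by simp [← h] at hw
  have hval :
      (z / (1 + γ - γ * z)) ^ (j + 1) = (z / (1 + γ)) ^ (j + 1) * (1 / (1 - w) ^ (j + 1)) := by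
    rw [show 1 + γ - γ * z = (1 + γ) * (1 - w) by simp only [w]; field_simp]
    rw [mul_comm, ← div_div, div_pow, div_pow, div_pow]
    ring
  rw [hval]
  have hgeom :=
    (hasSum_choose_mul_geometric_of_norm_lt_one j hw).mul_left ((z / (1 + γ)) ^ (j + 1))
  refine ((add_left_injective (j + 1)).hasSum_iff fun n hn => ?_).1 ?_
  · rw [eq_zero_of_lt (by_contra fun h => hn ⟨n - (j + 1), by simp only; omega⟩)]
    simp
  · refine hgeom.congr_fun fun m => ?_
    rw [Function.comp_apply, moebiusPowCoeff, if_pos (Nat.le_add_left _ _), Nat.add_sub_cancel,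
      show m + (j + 1) - 1 = m + j by omega, Nat.choose_symm_add]
    push_cast
    simp only [w, div_pow, mul_pow, pow_add]
    field_simp

lemma summable_mul_pow (hγ : 0 ≤ γ) {x : ℝ} (hx0 : 0 ≤ x) (hx : x < 1) :
    Summable fun p : ℕ × ℕ => moebiusPowCoeff γ p.2 p.1 * x ^ p.2 := by
  have hrow : ∀ k, HasSum (fun n => moebiusPowCoeff γ n k * x ^ n) ((x / (1 + γ - γ * x)) ^ k) :=
    fun k => by exact_mod_cast hasSum_pow hγ (z := x) (by simpa [abs_of_nonneg hx0]) k
  have hq : x / (1 + γ - γ * x) < 1 := by rw [div_lt_one (by nlinarith)]; nlinarith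
  refine (summable_prod_of_nonneg fun p => ?_).2 ⟨fun k => (hrow k).summable, ?_⟩
  · exact mul_nonneg (nonneg hγ _ _) (pow_nonneg hx0 _)
  · simpa only [(hrow _).tsum_eq] using
      summable_geometric_of_lt_one (div_nonneg hx0 (by nlinarith)) hq

end moebiusPowCoeff

lemma norm_lt_norm_one_add_sub_mul {γ : ℝ} (hγ : 0 ≤ γ) {z : ℂ} (hz : ‖z‖ < 1) :
    ‖z‖ < ‖(1 + γ - γ * z : ℂ)‖ :=
  calc ‖z‖ < ‖(1 + γ : ℂ)‖ - ‖(γ : ℂ) * z‖ := by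
          rw [norm_mul, Complex.norm_real, Real.norm_of_nonneg hγ, ← Complex.ofReal_one,
            ← Complex.ofReal_add, Complex.norm_real, Real.norm_of_nonneg (by positivity)]
          nlinarith [norm_nonneg z]
      _ ≤ ‖(1 + γ - γ * z : ℂ)‖ := norm_sub_norm_le _ _

lemma norm_div_one_add_sub_mul_lt_one {γ : ℝ} (hγ : 0 ≤ γ) {z : ℂ} (hz : ‖z‖ < 1) :
    ‖z / (1 + γ - γ * z)‖ < 1 := by
  have hD := norm_lt_norm_one_add_sub_mul hγ hz
  rwa [norm_div, div_lt_one ((norm_nonneg z).trans_lt hD)]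

lemma moebius_div_one_add_sub_mul {γ : ℝ} (hγ : 0 ≤ γ) {z : ℂ} (hz : ‖z‖ < 1) :
    (1 + γ) * (z / (1 + γ - γ * z)) / (1 + γ * (z / (1 + γ - γ * z))) = z := by
  have hD : (1 + γ - γ * z : ℂ) ≠ 0 :=
    norm_pos_iff.1 ((norm_nonneg z).trans_lt (norm_lt_norm_one_add_sub_mul hγ hz))
  have h1γ : (1 + γ : ℂ) ≠ 0 := by exact_mod_cast (by positivity : (0 : ℝ) < 1 + γ).ne'
  rw [show 1 + γ * (z / (1 + γ - γ * z)) = (1 + γ) / (1 + γ - γ * z) by field_simp; ring]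
  field_simp

lemma one_add_mul_ne_zero_of_norm_lt_one {γ : ℝ} (hγ : |γ| < 1) {u : ℂ} (hu : ‖u‖ < 1) :
    (1 + γ * u : ℂ) ≠ 0 := fun h => by
  have : ‖(γ : ℂ) * u‖ < 1 := by
    rw [norm_mul, Complex.norm_real, Real.norm_eq_abs]
    nlinarith [abs_nonneg γ, norm_nonneg u]
  simp [eq_neg_of_add_eq_zero_right h] at this

lemma mapsTo_ball_omega {γ : ℝ} (hγ : |γ| < 1) :
    MapsTo (fun u : ℂ => (1 + γ) * u / (1 + γ * u)) (ball 0 1)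
      (ball (-(γ / (1 - γ)) : ℂ) (1 / (1 - γ))) := fun u hu => by
  rw [mem_ball_zero_iff] at hu
  have h1γ : 0 < 1 - γ := by linarith [abs_lt.1 hγ]
  have hlt : ‖u + γ‖ < ‖1 + γ * u‖ := by
    simpa [sub_neg_eq_add] using
      norm_sub_lt_norm_one_sub_conj_mul (a := -γ) (by simpa using hγ) hu
  have hne := one_add_mul_ne_zero_of_norm_lt_one hγ hu
  have h1γC : (1 - γ : ℂ) ≠ 0 := by exact_mod_cast h1γ.ne'
  have hid : (1 + γ) * u / (1 + γ * u) + γ / (1 - γ) = (u + γ) / ((1 - γ) * (1 + γ * u)) := by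
    field_simp
    ring
  have hnorm : ‖(1 - γ : ℂ)‖ = 1 - γ := by
    rw [← Complex.ofReal_one, ← Complex.ofReal_sub, Complex.norm_real, Real.norm_of_nonneg h1γ.le]
  rw [mem_ball, Complex.dist_eq, sub_neg_eq_add, hid, norm_div, norm_mul, hnorm,
    div_lt_div_iff₀ (by positivity [norm_pos_iff.2 hne]) h1γ]
  nlinarith

lemma hasSum_tsum_mul_moebiusPowCoeff {γ : ℝ} (hγ : 0 ≤ γ) {d : ℕ → ℂ} {G : ℂ → ℂ}
    (hd : ∀ w ∈ ball (0 : ℂ) 1, HasSum (fun k => d k * w ^ k) (G w)) (hd1 : ∀ k, ‖d k‖ ≤ 1)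
    {z : ℂ} (hz : ‖z‖ < 1) :
    HasSum (fun n => (∑' k, d k * moebiusPowCoeff γ n k) * z ^ n) (G (z / (1 + γ - γ * z))) := by
  refine hasSum_tsum_mul_pow_of_hasSum_comp (e := fun n k => (moebiusPowCoeff γ n k : ℂ))
    (hd _ (mem_ball_zero_iff.2 (norm_div_one_add_sub_mul_lt_one hγ hz)))
    (moebiusPowCoeff.hasSum_pow hγ hz) ?_
  refine (moebiusPowCoeff.summable_mul_pow hγ (norm_nonneg z) hz).of_norm_bounded fun p => ?_
  rw [norm_mul, norm_mul, norm_pow, Complex.norm_real,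
    Real.norm_of_nonneg (moebiusPowCoeff.nonneg hγ _ _), mul_assoc]
  exact mul_le_of_le_one_left (by positivity [moebiusPowCoeff.nonneg hγ p.2 p.1]) (hd1 p.1)

theorem norm_coeff_le_of_omega {γ : ℝ} (hγ0 : 0 ≤ γ) (hγ1 : γ < 1) {f : ℂ → ℂ} {a : ℕ → ℂ}
    (hf : DifferentiableOn ℂ f (ball (-(γ / (1 - γ)) : ℂ) (1 / (1 - γ))))
    (hb : ∀ z ∈ ball (-(γ / (1 - γ)) : ℂ) (1 / (1 - γ)), ‖f z‖ ≤ 1)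
    (hs : ∀ z ∈ ball (0 : ℂ) 1, HasSum (fun n => a n * z ^ n) (f z)) {n : ℕ} (hn : n ≠ 0) :
    ‖a n‖ ≤ (1 - ‖a 0‖ ^ 2) / (1 + γ) := by
  have hγ : |γ| < 1 := abs_lt.2 ⟨by linarith, hγ1⟩
  set ψ : ℂ → ℂ := fun u => (1 + γ) * u / (1 + γ * u)
  have hψ : DifferentiableOn ℂ ψ (ball 0 1) :=
    (differentiableOn_id.const_mul _).div ((differentiableOn_id.const_mul _).const_add _)
      fun u hu => one_add_mul_ne_zero_of_norm_lt_one hγ (mem_ball_zero_iff.1 hu)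
  have hGb : MapsTo (f ∘ ψ) (ball 0 1) (closedBall 0 1) := fun u hu =>
    mem_closedBall_zero_iff.2 (hb _ (mapsTo_ball_omega hγ hu))
  obtain ⟨d, hd⟩ := exists_hasSum_of_differentiableOn (hf.comp hψ (mapsTo_ball_omega hγ))
  have hd0 : d 0 = a 0 := by
    rw [← (hd 0 (mem_ball_self one_pos)).unique (hasSum_mul_zero_pow d),
      ← (hs 0 (mem_ball_self one_pos)).unique (hasSum_mul_zero_pow a)]
    simp [ψ]
  have hdk : ∀ k ≠ 0, ‖d k‖ ≤ 1 - ‖a 0‖ ^ 2 := fun k hk =>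
    hd0 ▸ norm_coeff_le_one_sub_sq hd hGb hk
  have hd1 : ∀ k, ‖d k‖ ≤ 1 := fun k => by
    rcases eq_or_ne k 0 with rfl | hk
    · simpa [← (hd 0 (mem_ball_self one_pos)).unique (hasSum_mul_zero_pow d)] using
        hGb (mem_ball_self one_pos)
    · linarith [hdk k hk, sq_nonneg ‖a 0‖]
  have hcomp : ∀ z ∈ ball (0 : ℂ) 1,
      HasSum (fun n => (∑' k, d k * moebiusPowCoeff γ n k) * z ^ n) (f z) := fun z hz => by
    rw [mem_ball_zero_iff] at hz
    simpa [ψ, moebius_div_one_add_sub_mul hγ0 hz] using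
      hasSum_tsum_mul_moebiusPowCoeff hγ0 hd hd1 hz
  rw [congrFun (coeff_eq_of_hasSum one_pos hs hcomp) n, ← mul_one_div]
  refine tsum_of_norm_bounded ((moebiusPowCoeff.hasSum_row (by positivity) hn).mul_left _)
    fun k => ?_
  rw [norm_mul, Complex.norm_real, Real.norm_of_nonneg (moebiusPowCoeff.nonneg hγ0 _ _)]
  rcases eq_or_ne k 0 with rfl | hk
  · simp [moebiusPowCoeff.zero_right hn]
  · exact mul_le_mul_of_nonneg_right (hdk k hk) (moebiusPowCoeff.nonneg hγ0 _ _)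

lemma summable_pow_succ_div {R β : ℝ} (hβ : 0 < β) (hR0 : 0 ≤ R) (hR1 : R < 1) :
    Summable fun n : ℕ => R ^ (n + 1) / ((n : ℝ) + 1 + β) := by
  refine ((summable_geometric_of_lt_one hR0 hR1).mul_left (R / β)).of_nonneg_of_le
    (fun n => by positivity) fun n => ?_
  calc R ^ (n + 1) / ((n : ℝ) + 1 + β) ≤ R ^ (n + 1) / β := by
        gcongr; linarith [n.cast_nonneg (α := ℝ)]
    _ = R / β * R ^ n := by ring

lemma tsum_mul_pow_div_le {c : ℕ → ℝ} {K β r R : ℝ} (hβ : 0 < β) (hc : ∀ n, 0 ≤ c n)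
    (hcK : ∀ n, c (n + 1) ≤ K) (hr0 : 0 ≤ r) (hrR : r ≤ R) (hR1 : R < 1) :
    ∑' n : ℕ, c n * r ^ n / ((n : ℝ) + β) ≤
      c 0 / β + K * ∑' n : ℕ, R ^ (n + 1) / ((n : ℝ) + 1 + β) := by
  have hS := summable_pow_succ_div hβ (hr0.trans hrR) hR1
  have hK : 0 ≤ K := (hc 1).trans (hcK 0)
  have hterm : ∀ n : ℕ, c (n + 1) * r ^ (n + 1) / (((n + 1 : ℕ) : ℝ) + β) ≤
      K * (R ^ (n + 1) / ((n : ℝ) + 1 + β)) := fun n => by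
    rw [Nat.cast_succ, mul_div_assoc]
    gcongr
    · exact hcK n
  have htail := (hS.mul_left K).of_nonneg_of_le (fun n => by have := hc (n + 1); positivity) hterm
  rw [tsum_eq_zero_add' (f := fun n : ℕ => c n * r ^ n / ((n : ℝ) + β)) htail, ← tsum_mul_left]
  simp only [pow_zero, mul_one, Nat.cast_zero, zero_add]
  exact add_le_add_right (htail.tsum_le_tsum hterm (hS.mul_left K)) _

/-- Bohr type inequality for the Bernardi integral operator on `Ω_γ`. -/
theorem bernardi_bohr_on_Omega (γ β R : ℝ) (hγ0 : 0 ≤ γ) (hγ1 : γ < 1) (hβ : 0 < β)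
    (f : ℂ → ℂ) (a : ℕ → ℂ)
    (hf : AnalyticOn ℂ f (Metric.ball (-(γ / (1 - γ)) : ℂ) (1 / (1 - γ))))
    (hb : ∀ z ∈ Metric.ball (-(γ / (1 - γ)) : ℂ) (1 / (1 - γ)), ‖f z‖ ≤ 1)
    (hs : ∀ z ∈ Metric.ball (0 : ℂ) 1, HasSum (fun n : ℕ => a n * z ^ n) (f z))
    (hR : R ∈ Set.Ioo (0 : ℝ) 1)
    (hroot : 1 / β = (2 / (1 + γ)) * ∑' n : ℕ, R ^ (n + 1) / ((n : ℝ) + 1 + β)) :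
    ∀ r ∈ Set.Icc (0 : ℝ) R,
      (∑' n : ℕ, ‖a n‖ * r ^ n / ((n : ℝ) + β)) ≤ 1 / β := by
  rintro r ⟨hr0, hrR⟩
  have hcoeff (n : ℕ) : ‖a (n + 1)‖ ≤ (1 - ‖a 0‖ ^ 2) / (1 + γ) :=
    norm_coeff_le_of_omega hγ0 hγ1 hf.differentiableOn hb hs n.succ_ne_zero
  have hS : ∑' n : ℕ, R ^ (n + 1) / ((n : ℝ) + 1 + β) = (1 + γ) / (2 * β) := by
    have : (0 : ℝ) < 1 + γ := by linarith
    field_simp at hroot ⊢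
    linarith
  calc ∑' n : ℕ, ‖a n‖ * r ^ n / ((n : ℝ) + β)
      ≤ ‖a 0‖ / β + (1 - ‖a 0‖ ^ 2) / (1 + γ) * ∑' n : ℕ, R ^ (n + 1) / ((n : ℝ) + 1 + β) :=
        tsum_mul_pow_div_le hβ (fun n => norm_nonneg _) hcoeff hr0 hrR hR.2
    _ = (1 - (1 - ‖a 0‖) ^ 2 / 2) / β := by
        rw [hS]
        field_simp
        ring
    _ ≤ 1 / β := by gcongr; linarith [sq_nonneg (1 - ‖a 0‖)]
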